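/- For every real number t > 1 and every real number x > 0, the quantity S(x,t) = t + (t−1)·cosh²(tx)/sinh²((t−1)x) − cosh(x)cosh(tx)/(x·sinh((t−1)x)) satisfies S(x,t) > (2+4t)/3. -/

import Mathlib

/-!
Put `s = (t - 1) x`, so that `t x = x + s` and `cosh (t x) = cosh x cosh s + sinh x sinh s`.
After multiplying by `x sinh² s` the claim becomes a polynomial inequality in `cosh x`, `sinh x`,
`cosh s`, `sinh s`, which follows from `cosh x ≥ 1`, `sinh x > x`, `tanh s ≤ s` and
`s sinh² s ≤ 3 cosh s (s cosh s - sinh s)`. The last one is `3 sinh y ≤ y cosh y + 2 y` at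
`y = 2 s`, proved by comparing derivatives three times:
`sinh y ≤ y cosh y ⟹ 2 cosh y ≤ y sinh y + 2 ⟹ 3 sinh y ≤ y cosh y + 2 y`.
-/

open Real Set

theorem le_of_hasDerivAt_le_of_le {f g f' g' : ℝ → ℝ} {a y : ℝ}
    (hf : ∀ z, HasDerivAt f (f' z) z) (hg : ∀ z, HasDerivAt g (g' z) z) (ha : f a ≤ g a)
    (hderiv : ∀ z, a < z → f' z ≤ g' z) (hy : a ≤ y) : f y ≤ g y := by
  have hmono : MonotoneOn (g - f) (Ici a) := by
    refine monotoneOn_of_hasDerivWithinAt_nonneg (convex_Ici a)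
      (fun z _ ↦ ((hg z).sub (hf z)).continuousAt.continuousWithinAt)
      (fun z _ ↦ ((hg z).sub (hf z)).hasDerivWithinAt) fun z hz ↦ ?_
    rw [interior_Ici, mem_Ioi] at hz
    exact sub_nonneg.2 (hderiv z hz)
  have := hmono (mem_Ici.2 le_rfl) (mem_Ici.2 hy) hy
  simp only [Pi.sub_apply] at this
  linarith

namespace Real

theorem sinh_le_mul_cosh {y : ℝ} (hy : 0 ≤ y) : sinh y ≤ y * cosh y :=
  le_of_hasDerivAt_le_of_le (g' := fun z ↦ 1 * cosh z + z * sinh z) hasDerivAt_sinh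
    (fun z ↦ (hasDerivAt_id z).mul (hasDerivAt_cosh z))
    (by simp) (fun z hz ↦ by simp only [one_mul, le_add_iff_nonneg_right]; positivity) hy

theorem two_mul_cosh_le {y : ℝ} (hy : 0 ≤ y) : 2 * cosh y ≤ y * sinh y + 2 :=
  le_of_hasDerivAt_le_of_le (fun z ↦ (hasDerivAt_cosh z).const_mul 2)
    (fun z ↦ ((hasDerivAt_id z).mul (hasDerivAt_sinh z)).add_const 2)
    (by simp) (fun z hz ↦ by simp only [one_mul, id_eq]; linarith [sinh_le_mul_cosh hz.le]) hy

theorem three_mul_sinh_le {y : ℝ} (hy : 0 ≤ y) : 3 * sinh y ≤ y * cosh y + 2 * y :=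
  le_of_hasDerivAt_le_of_le (fun z ↦ (hasDerivAt_sinh z).const_mul 3)
    (fun z ↦ ((hasDerivAt_id z).mul (hasDerivAt_cosh z)).add ((hasDerivAt_id z).const_mul 2))
    (by simp) (fun z hz ↦ by simp only [one_mul, id_eq, mul_one]; linarith [two_mul_cosh_le hz.le]) hy

theorem mul_sinh_sq_le {s : ℝ} (hs : 0 ≤ s) :
    s * sinh s ^ 2 ≤ 3 * cosh s * (s * cosh s - sinh s) := by
  have h := three_mul_sinh_le (mul_nonneg zero_le_two hs)
  rw [sinh_two_mul, cosh_two_mul] at h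
  nlinarith [cosh_sq' s]

end Real

/-- Used with `A = cosh x`, `B = sinh x`, `C = cosh s`, `S = sinh s`, so that
`A * C + B * S = cosh (x + s)`. -/
theorem polynomial_bound {x s A B C S : ℝ} (hx : 0 < x) (hs : 0 < s) (hA : 1 ≤ A) (hB : x < B)
    (hS : 0 < S) (hSC : S ≤ s * C) (hsS : s * S ^ 2 ≤ 3 * C * (s * C - S)) :
    (s / 3 + x) * S ^ 2 < (A * C + B * S) * (A * (s * C - S) + s * B * S) := by
  have hC : 0 < C := pos_of_mul_pos_right (hS.trans_le hSC) hs.le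
  have hB0 : 0 < B := hx.trans hB
  have h₁ : s * S ^ 2 / 3 ≤ (A * C + B * S) * A * (s * C - S) := by
    have : C ≤ (A * C + B * S) * A := by
      nlinarith [mul_pos hB0 hS,
        mul_nonneg (mul_nonneg (sub_nonneg.2 hA) (by linarith : 0 ≤ A + 1)) hC.le]
    nlinarith [mul_le_mul_of_nonneg_right this (sub_nonneg.2 hSC)]
  have h₂ : x * S ^ 2 < (A * C + B * S) * s * B * S := by
    have : S < (A * C + B * S) * s := by nlinarith [mul_pos (mul_pos hB0 hS) hs]
    nlinarith [mul_lt_mul_of_pos_right this (mul_pos hB0 hS),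
      mul_lt_mul_of_pos_right hB (pow_pos hS 2)]
  nlinarith

theorem S_gt (t x : ℝ) (ht : 1 < t) (hx : 0 < x) :
    (2 + 4 * t) / 3 <
      t + (t - 1) * (Real.cosh (t * x)) ^ 2 / (Real.sinh ((t - 1) * x)) ^ 2 -
        Real.cosh x * Real.cosh (t * x) / (x * Real.sinh ((t - 1) * x)) := by
  set s := (t - 1) * x with hs_def
  have hs : 0 < s := mul_pos (sub_pos.2 ht) hx
  have hS : 0 < sinh s := sinh_pos_iff.2 hs
  have hcosh : cosh (t * x) = cosh x * cosh s + sinh x * sinh s := by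
    rw [← cosh_add]; congr 1; ring
  have key := polynomial_bound hx hs (one_le_cosh x) (self_lt_sinh_iff.2 hx) hS
    (sinh_le_mul_cosh hs.le) (mul_sinh_sq_le hs.le)
  refine lt_of_sub_pos ((div_pos (sub_pos.2 key) (mul_pos hx (pow_pos hS 2))).trans_eq ?_)
  rw [hcosh]
  field_simp
  rw [hs_def]
  ring
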